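/- Let V ⊆ ℤ² be a 2-VAS containing a vector (x,0) with x > 0 and a vector (x′,y′) with x′ ≤ 0 and y′ > 0. Then the vector s = ((−2x′+1)·x + x′, y′) has strictly positive coordinates, is box-reachable in V (witnessed by the path (x,0)^{−x′}, (x′,y′), (x,0)^{−x′+1}), and moreover for every integer m ≥ 1 the multiple m·s is box-reachable in V. -/

import Mathlib

/-- `t` is box-reachable in the `d`-VAS `V` via the specific path `π`. -/
def BoxReachVia {d : ℕ} (V : Finset (Fin d → ℤ)) (π : List (Fin d → ℤ))
    (t : Fin d → ℤ) : Prop :=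
  (∀ v ∈ π, v ∈ V) ∧ π.sum = t ∧
    ∀ j : ℕ, ∀ i : Fin d, 0 ≤ ((π.take j).sum) i ∧ ((π.take j).sum) i ≤ t i

/-- `t` is box-reachable in the `d`-VAS `V`. -/
def BoxReach {d : ℕ} (V : Finset (Fin d → ℤ)) (t : Fin d → ℤ) : Prop :=
  ∃ π : List (Fin d → ℤ), BoxReachVia V π t

/-!
The path `(x,0)^n, (-n,y), (x,0)^(n+1)` first climbs to `(n x, 0)`, then drops to `(n (x-1), y)`,
which is still nonnegative since `x ≥ 1`, and climbs again to `s = ((2n+1) x - n, y)`; all its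
prefix sums stay in the box `[0, s]`. Since box-reachability witnesses for `s` and `t` concatenate
to one for `s + t`, every positive multiple of `s` is box-reachable as well.
-/

section PrefixSums

variable {M : Type*} [AddMonoid M] (P : M → Prop)

theorem List.forall_sum_take_append_iff (ρ π : List M) :
    (∀ j, P ((ρ ++ π).take j).sum) ↔
      (∀ j, P (ρ.take j).sum) ∧ ∀ j, P (ρ.sum + (π.take j).sum) := by
  constructor
  · intro h
    refine ⟨fun j => ?_, fun j => ?_⟩
    · by_cases hj : j ≤ ρ.length
      · simpa [List.take_append, Nat.sub_eq_zero_of_le hj] using h j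
      · simpa [List.take_of_length_le (Nat.le_of_not_le hj)] using h ρ.length
    · simpa [List.take_append, List.take_of_length_le (Nat.le_add_right ρ.length j)]
        using h (ρ.length + j)
  · rintro ⟨hρ, hπ⟩ j
    rw [List.take_append, List.sum_append]
    by_cases hj : j ≤ ρ.length
    · simpa [Nat.sub_eq_zero_of_le hj] using hρ j
    · simpa [List.take_of_length_le (Nat.le_of_not_le hj)] using hπ (j - ρ.length)

theorem List.forall_sum_take_replicate_iff (n : ℕ) (a : M) :
    (∀ j, P ((List.replicate n a).take j).sum) ↔ ∀ k ≤ n, P (k • a) := by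
  simp only [List.take_replicate, List.sum_replicate]
  exact ⟨fun h k hk => by simpa [min_eq_left hk] using h k, fun h j => h _ (min_le_right j n)⟩

theorem List.forall_sum_take_singleton_iff (b : M) :
    (∀ j, P ([b].take j).sum) ↔ P 0 ∧ P b := by
  refine ⟨fun h => ⟨by simpa using h 0, by simpa using h 1⟩, fun ⟨h0, hb⟩ j => ?_⟩
  cases j <;> simpa

end PrefixSums

section BoxReach

variable {d : ℕ} {V : Finset (Fin d → ℤ)}

theorem BoxReachVia.append {ρ π : List (Fin d → ℤ)} {s t : Fin d → ℤ}
    (hρ : BoxReachVia V ρ s) (hπ : BoxReachVia V π t) :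
    BoxReachVia V (ρ ++ π) (s + t) := by
  obtain ⟨hρV, hρs, hρbox⟩ := hρ
  obtain ⟨hπV, hπt, hπbox⟩ := hπ
  refine ⟨fun v hv => (List.mem_append.mp hv).elim (hρV v) (hπV v), by simp [hρs, hπt], ?_⟩
  refine (List.forall_sum_take_append_iff (fun v => ∀ i, 0 ≤ v i ∧ v i ≤ (s + t) i) ρ π).2
    ⟨fun j i => ?_, fun j i => ?_⟩
  · have hρj := hρbox j i
    have ht : 0 ≤ t i := by simpa using (hπbox 0 i).2
    simp only [Pi.add_apply]
    constructor <;> linarith [hρj.1, hρj.2]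
  · have hs : 0 ≤ s i := by simpa [hρs] using (hρbox ρ.length i).1
    have hπj := hπbox j i
    simp only [Pi.add_apply, hρs]
    constructor <;> linarith [hπj.1, hπj.2]

theorem BoxReach.zsmul {t : Fin d → ℤ} (h : BoxReach V t) {m : ℤ} (hm : 1 ≤ m) :
    BoxReach V (m • t) := by
  obtain ⟨π, hπ⟩ := h
  induction m, hm using Int.leInduction with
  | base => exact ⟨π, by rwa [one_smul]⟩
  | succ k _ ih =>
    obtain ⟨ρ, hρ⟩ := ih
    exact ⟨ρ ++ π, by rw [add_smul, one_smul]; exact hρ.append hπ⟩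

end BoxReach

theorem boxReachVia_zigzag (V : Finset (Fin 2 → ℤ)) (n : ℕ) (x y : ℤ) (hx : 0 < x)
    (hy : 0 ≤ y) (ha : ![x, 0] ∈ V) (hb : ![-(n : ℤ), y] ∈ V) :
    BoxReachVia V
      (List.replicate n ![x, 0] ++ [![-(n : ℤ), y]] ++ List.replicate (n + 1) ![x, 0])
      ![(2 * n + 1) * x - n, y] := by
  refine ⟨?_, ?_, ?_⟩
  · intro v hv
    simp only [List.mem_append, List.mem_replicate, List.mem_singleton] at hv
    rcases hv with (⟨-, rfl⟩ | rfl) | ⟨-, rfl⟩ <;> assumption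
  · ext i
    fin_cases i <;>
      simp only [List.sum_append, List.sum_replicate, List.sum_singleton, Pi.add_apply,
        Pi.smul_apply, Fin.zero_eta, Fin.mk_one, Fin.isValue, Matrix.cons_val_zero,
        Matrix.cons_val_one, Matrix.cons_val_fin_one, Int.nsmul_eq_mul, Nat.cast_add,
        Nat.cast_one] <;>
      ring
  · have hkx (k : ℕ) : 0 ≤ (k : ℤ) * x := by positivity
    have hnx : (n : ℤ) ≤ n * x := le_mul_of_one_le_right n.cast_nonneg hx
    let P : (Fin 2 → ℤ) → Prop := fun v => ∀ i, 0 ≤ v i ∧ v i ≤ ![(2 * n + 1) * x - n, y] i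
    refine (List.forall_sum_take_append_iff P _ _).2
      ⟨(List.forall_sum_take_append_iff P _ _).2
        ⟨(List.forall_sum_take_replicate_iff P _ _).2 fun k hk => ?_,
          (List.forall_sum_take_singleton_iff (fun v => P (_ + v)) _).2 ?_⟩,
        (List.forall_sum_take_replicate_iff (fun v => P (_ + v)) _ _).2 fun k hk => ?_⟩
    all_goals simp only [P, Fin.forall_fin_two, Fin.isValue, Matrix.cons_val_zero,
      Matrix.cons_val_one, Matrix.cons_val_fin_one, List.sum_append, List.sum_replicate,
      List.sum_cons, List.sum_nil, Matrix.smul_cons, Int.nsmul_eq_mul, nsmul_zero,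
      Matrix.smul_empty, Matrix.add_cons, Matrix.head_cons, Matrix.tail_cons, Matrix.empty_add_empty,
      add_zero, zero_add]
    · have : (k : ℤ) * x ≤ n * x := mul_le_mul_of_nonneg_right (by exact_mod_cast hk) hx.le
      and_intros <;> linarith [hkx k]
    · and_intros <;> linarith [hkx n]
    · have : (k : ℤ) * x ≤ (n + 1) * x := mul_le_mul_of_nonneg_right (by exact_mod_cast hk) hx.le
      and_intros <;> linarith [hkx k]

/-- If a 2-VAS `V` contains `(x,0)` with `x > 0` and `(x′,y′)` with `x′ ≤ 0`,
`y′ > 0`, then `s = ((−2x′+1)x + x′, y′)` has strictly positive coordinates,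
is box-reachable via the path `(x,0)^{−x′}, (x′,y′), (x,0)^{−x′+1}`, and all
positive multiples `m·s` are box-reachable. -/
theorem pos_vector_boxReachable (V : Finset (Fin 2 → ℤ)) (x x' y' : ℤ)
    (hx : 0 < x) (hx' : x' ≤ 0) (hy' : 0 < y')
    (hmem1 : ![x, 0] ∈ V) (hmem2 : ![x', y'] ∈ V) :
    (0 < (-2 * x' + 1) * x + x' ∧ 0 < y') ∧
    BoxReachVia V
      (List.replicate (-x').toNat ![x, 0] ++ [![x', y']] ++
        List.replicate (-x' + 1).toNat ![x, 0])
      ![(-2 * x' + 1) * x + x', y'] ∧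
    (∀ m : ℤ, 1 ≤ m → BoxReach V (m • ![(-2 * x' + 1) * x + x', y'])) := by
  obtain ⟨n, rfl⟩ : ∃ n : ℕ, x' = -n := ⟨(-x').toNat, by omega⟩
  have hvia := boxReachVia_zigzag V n x y' hx hy'.le hmem1 hmem2
  have hs : (-2 * -(n : ℤ) + 1) * x + -n = (2 * n + 1) * x - n := by ring
  have hlen : (-(-(n : ℤ)) + 1).toNat = n + 1 := by omega
  rw [hs, hlen, neg_neg, Int.toNat_natCast]
  refine ⟨⟨by nlinarith [n.cast_nonneg (α := ℤ)], hy'⟩, hvia, fun m hm => ?_⟩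
  exact BoxReach.zsmul ⟨_, hvia⟩ hm
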